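/- arXiv:2103.04684 — 4 statements merged into one kernel-verified Lean document; each statement's English description precedes it below -/
import Mathlib

section
/- Define f(x_1,...,x_k) = Σ_{i=1}^k (x_i²/2 - x_i³/2) + Σ_{1≤i<j≤k} (x_i x_j + x_i x_j²/2 - 3 x_i² x_j/2 - 2 x_j³/3) for k ≥ 3. Then for all real x_1 ≥ x_2 ≥ ... ≥ x_k ≥ 0 with x_1 + ... + x_k ≤ 1 and x_1 ≤ 1/2, f(x_1,...,x_k) ≤ f(1/k, ..., 1/k) = 1/2 - 5/(6k) + 1/(3k²). -/
/-- The continuous analogue of the distance-unbalancedness of a subdivided star. -/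
noncomputable def F {k : ℕ} (x : Fin k → ℝ) : ℝ :=
  (∑ i : Fin k, (x i ^ 2 / 2 - x i ^ 3 / 2))
    + ∑ i : Fin k, ∑ j ∈ Finset.Ioi i,
        (x i * x j + x i * x j ^ 2 / 2 - 3 * x i ^ 2 * x j / 2 - 2 * x j ^ 3 / 3)

variable {k : ℕ}

lemma sum_split (i : Fin k) (f : Fin k → ℝ) :
    ∑ j, f j = ∑ j ∈ Finset.Iio i, f j + (f i + ∑ j ∈ Finset.Ioi i, f j) := by
  have hdisj : Disjoint (Finset.Iio i) (Finset.Ici i) := by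
    rw [Finset.disjoint_left]
    intro a ha hb
    simp only [Finset.mem_Iio] at ha
    simp only [Finset.mem_Ici] at hb
    exact absurd hb (not_le.mpr ha)
  have hu : (Finset.Iio i) ∪ (Finset.Ici i) = Finset.univ := by
    ext j
    simp [lt_or_ge]
  rw [← hu, Finset.sum_union hdisj, Finset.Ici_eq_cons_Ioi, Finset.sum_cons]

lemma tri (φ : Fin k → Fin k → ℝ) :
    ∑ i, ∑ j, φ i j = ∑ i, φ i i + ∑ i, ∑ j ∈ Finset.Ioi i, (φ i j + φ j i) := by
  have h1 : ∑ i, ∑ j, φ i j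
      = ∑ i, ∑ j ∈ Finset.Iio i, φ i j + (∑ i, φ i i + ∑ i, ∑ j ∈ Finset.Ioi i, φ i j) := by
    rw [← Finset.sum_add_distrib, ← Finset.sum_add_distrib]
    exact Finset.sum_congr rfl fun i _ => sum_split i _
  have h2 : ∑ i, ∑ j ∈ Finset.Iio i, φ i j = ∑ j, ∑ i ∈ Finset.Ioi j, φ i j :=
    Finset.sum_comm' (fun a b => by simp [and_comm])
  have h3 : ∑ i, ∑ j ∈ Finset.Ioi i, (φ i j + φ j i)
      = ∑ i, ∑ j ∈ Finset.Ioi i, φ i j + ∑ i, ∑ j ∈ Finset.Ioi i, φ j i := by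
    rw [← Finset.sum_add_distrib]
    exact Finset.sum_congr rfl fun i _ => Finset.sum_add_distrib
  rw [h1, h2, h3]
  ring

lemma e1 (x : Fin k → ℝ) :
    (∑ i, x i) ^ 2 = ∑ i, x i ^ 2 + ∑ i, ∑ j ∈ Finset.Ioi i, 2 * (x i * x j) := by
  have := tri (fun i j => x i * x j)
  rw [sq, Fintype.sum_mul_sum, this]
  congr 1
  · exact Finset.sum_congr rfl fun i _ => (sq (x i)).symm
  · exact Finset.sum_congr rfl fun i _ =>
      Finset.sum_congr rfl fun j _ => by ring

lemma e2 (x : Fin k → ℝ) :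
    (∑ i, x i) * (∑ i, x i ^ 2)
      = ∑ i, x i ^ 3 + ∑ i, ∑ j ∈ Finset.Ioi i, (x i ^ 2 * x j + x i * x j ^ 2) := by
  have := tri (fun i j => x i * x j ^ 2)
  rw [Fintype.sum_mul_sum, this]
  congr 1
  · exact Finset.sum_congr rfl fun i _ => by ring
  · exact Finset.sum_congr rfl fun i _ =>
      Finset.sum_congr rfl fun j _ => by ring

lemma F_id (x : Fin k → ℝ) :
    F x = (∑ i, x i) ^ 2 / 2 - 5 / 6 * ((∑ i, x i) * (∑ i, x i ^ 2)) + (∑ i, x i ^ 3) / 3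
      - 2 / 3 * ∑ i, ∑ j ∈ Finset.Ioi i, x j * (x i - x j) ^ 2 := by
  rw [e1, e2]
  unfold F
  have hs : ∑ i, (x i ^ 2 / 2 - x i ^ 3 / 2) = (∑ i, x i ^ 2) / 2 - (∑ i, x i ^ 3) / 2 := by
    rw [Finset.sum_sub_distrib, Finset.sum_div, Finset.sum_div]
  have hpair : ∑ i : Fin k, ∑ j ∈ Finset.Ioi i,
      (x i * x j + x i * x j ^ 2 / 2 - 3 * x i ^ 2 * x j / 2 - 2 * x j ^ 3 / 3)
    = (∑ i : Fin k, ∑ j ∈ Finset.Ioi i, 2 * (x i * x j)) / 2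
      - 5 / 6 * (∑ i : Fin k, ∑ j ∈ Finset.Ioi i, (x i ^ 2 * x j + x i * x j ^ 2))
      - 2 / 3 * (∑ i : Fin k, ∑ j ∈ Finset.Ioi i, x j * (x i - x j) ^ 2) := by
    rw [Finset.sum_div, Finset.mul_sum, Finset.mul_sum, ← Finset.sum_sub_distrib,
      ← Finset.sum_sub_distrib]
    refine Finset.sum_congr rfl fun i _ => ?_
    rw [Finset.sum_div, Finset.mul_sum, Finset.mul_sum, ← Finset.sum_sub_distrib,
      ← Finset.sum_sub_distrib]
    exact Finset.sum_congr rfl fun j _ => by ring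
  rw [hs, hpair]
  ring

set_option maxHeartbeats 1600000 in
theorem F_le_uniform {k : ℕ} (hk : 3 ≤ k) (x : Fin k → ℝ)
    (hsort : Antitone x) (hpos : ∀ i, 0 ≤ x i) (hsum : ∑ i, x i ≤ 1)
    (hhalf : x ⟨0, by omega⟩ ≤ 1 / 2) :
    F x ≤ F (fun _ : Fin k => 1 / (k : ℝ))
      ∧ F (fun _ : Fin k => 1 / (k : ℝ)) = 1 / 2 - 5 / (6 * (k : ℝ)) + 1 / (3 * (k : ℝ) ^ 2) := by
  have hK : (3:ℝ) ≤ (k:ℝ) := by exact_mod_cast hk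
  have hK0 : (0:ℝ) < (k:ℝ) := by linarith
  have hk0 : ((k:ℝ)) ≠ 0 := ne_of_gt hK0
  have hk2 : 3 * (k:ℝ) ≤ (k:ℝ) ^ 2 := by nlinarith
  have huF : F (fun _ : Fin k => 1 / (k : ℝ))
      = 1 / 2 - 5 / (6 * (k : ℝ)) + 1 / (3 * (k : ℝ) ^ 2) := by
    rw [F_id]
    simp only [sub_self, ne_eq, OfNat.ofNat_ne_zero, not_false_eq_true, zero_pow, mul_zero,
      Finset.sum_const_zero, Finset.sum_const, Finset.card_univ, Fintype.card_fin, nsmul_eq_mul]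
    field_simp
    ring
  refine ⟨?_, huF⟩
  rw [huF, F_id]
  set S := ∑ i, x i with hSdef
  have hS0 : 0 ≤ S := Finset.sum_nonneg fun i _ => hpos i
  have hS1 : S ≤ 1 := hsum
  have hxle : ∀ i, x i ≤ S := fun i =>
    Finset.single_le_sum (fun j _ => hpos j) (Finset.mem_univ i)
  have hT3 : 0 ≤ ∑ i, ∑ j ∈ Finset.Ioi i, x j * (x i - x j) ^ 2 :=
    Finset.sum_nonneg fun i _ => Finset.sum_nonneg fun j _ =>
      mul_nonneg (hpos j) (sq_nonneg _)
  set u : ℝ := S / (k:ℝ) with hu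
  have hu3 : u ≤ S / 3 := by
    rw [hu, div_le_div_iff₀ hK0 (by norm_num : (0:ℝ) < 3)]
    exact mul_le_mul_of_nonneg_left hK hS0
  -- tangent line bound, per coordinate
  have hper : ∀ i ∈ Finset.univ, x i ^ 3 / 3 - 5 / 6 * (S * x i ^ 2)
      ≤ (u ^ 3 / 3 - 5 / 6 * S * u ^ 2) + (u ^ 2 - 5 / 3 * S * u) * (x i - u) := by
    intro i _
    have h5 : 0 ≤ 5 / 6 * S - (x i + 2 * u) / 3 := by linarith [hxle i]
    have hprod := mul_nonneg (sq_nonneg (x i - u)) h5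
    have hident : (u ^ 3 / 3 - 5 / 6 * S * u ^ 2) + (u ^ 2 - 5 / 3 * S * u) * (x i - u)
        - (x i ^ 3 / 3 - 5 / 6 * (S * x i ^ 2))
        = (x i - u) ^ 2 * (5 / 6 * S - (x i + 2 * u) / 3) := by ring
    linarith
  have hsum2 := Finset.sum_le_sum hper
  have lhs_eq : ∑ i, (x i ^ 3 / 3 - 5 / 6 * (S * x i ^ 2))
      = (∑ i, x i ^ 3) / 3 - 5 / 6 * (S * ∑ i, x i ^ 2) := by
    rw [Finset.mul_sum, Finset.mul_sum, Finset.sum_div, ← Finset.sum_sub_distrib]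
  have rhs_eq : ∑ _i : Fin k, ((u ^ 3 / 3 - 5 / 6 * S * u ^ 2) + (u ^ 2 - 5 / 3 * S * u) * (x _i - u))
      = (k:ℝ) * (u ^ 3 / 3 - 5 / 6 * S * u ^ 2) + (u ^ 2 - 5 / 3 * S * u) * (S - (k:ℝ) * u) := by
    rw [Finset.sum_add_distrib, Finset.sum_const, Finset.card_univ, Fintype.card_fin,
      nsmul_eq_mul, ← Finset.mul_sum, Finset.sum_sub_distrib, Finset.sum_const,
      Finset.card_univ, Fintype.card_fin, nsmul_eq_mul]
  have hku : (k:ℝ) * u = S := by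
    rw [hu]; field_simp
  have hkA : (k:ℝ) * (u ^ 3 / 3 - 5 / 6 * S * u ^ 2)
      = S ^ 3 / (3 * (k:ℝ) ^ 2) - 5 / 6 * (S ^ 3 / (k:ℝ)) := by
    rw [hu]; field_simp
  have step1 : (∑ i, x i ^ 3) / 3 - 5 / 6 * (S * ∑ i, x i ^ 2)
      ≤ S ^ 3 / (3 * (k:ℝ) ^ 2) - 5 / 6 * (S ^ 3 / (k:ℝ)) := by
    rw [← lhs_eq, ← hkA]
    calc ∑ i, (x i ^ 3 / 3 - 5 / 6 * (S * x i ^ 2))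
        ≤ ∑ _i : Fin k, ((u ^ 3 / 3 - 5 / 6 * S * u ^ 2) + (u ^ 2 - 5 / 3 * S * u) * (x _i - u)) :=
          hsum2
      _ = (k:ℝ) * (u ^ 3 / 3 - 5 / 6 * S * u ^ 2) := by rw [rhs_eq, hku]; ring
  -- scalar endgame
  have hfin : S ^ 2 / 2 + (S ^ 3 / (3 * (k:ℝ) ^ 2) - 5 / 6 * (S ^ 3 / (k:ℝ)))
      ≤ 1 / 2 - 5 / (6 * (k:ℝ)) + 1 / (3 * (k:ℝ) ^ 2) := by
    have key : (1 / 2 - 5 / (6 * (k:ℝ)) + 1 / (3 * (k:ℝ) ^ 2))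
        - (S ^ 2 / 2 + (S ^ 3 / (3 * (k:ℝ) ^ 2) - 5 / 6 * (S ^ 3 / (k:ℝ))))
        = ((1 - S) ^ 2 * (3 * (k:ℝ) ^ 2 - 5 * (k:ℝ) + 2)
          + S * (1 - S) * (6 * (k:ℝ) ^ 2 - 15 * (k:ℝ) + 6)
          + (5 * (k:ℝ) - 2) * (S * (1 - S) ^ 2)) / (6 * (k:ℝ) ^ 2) := by
      field_simp
      ring
    have t1 : 0 ≤ (1 - S) ^ 2 * (3 * (k:ℝ) ^ 2 - 5 * (k:ℝ) + 2) :=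
      mul_nonneg (sq_nonneg _) (by linarith)
    have t2 : 0 ≤ S * (1 - S) * (6 * (k:ℝ) ^ 2 - 15 * (k:ℝ) + 6) :=
      mul_nonneg (mul_nonneg hS0 (by linarith)) (by linarith)
    have t3 : 0 ≤ (5 * (k:ℝ) - 2) * (S * (1 - S) ^ 2) :=
      mul_nonneg (by linarith) (mul_nonneg hS0 (sq_nonneg _))
    have hden : (0:ℝ) < 6 * (k:ℝ) ^ 2 := by positivity
    have := div_nonneg (by linarith : (0:ℝ) ≤ (1 - S) ^ 2 * (3 * (k:ℝ) ^ 2 - 5 * (k:ℝ) + 2)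
          + S * (1 - S) * (6 * (k:ℝ) ^ 2 - 15 * (k:ℝ) + 6)
          + (5 * (k:ℝ) - 2) * (S * (1 - S) ^ 2)) (le_of_lt hden)
    linarith [key ▸ this]
  linarith [step1, hfin, hT3]
end

section
/- For integers k ≥ 3 and real x_1 ∈ [1/2, 1], define f_3(x_1) = [(-10x_1³ + 27x_1² - 24x_1 + 8)k² + (28x_1³ - 75x_1² + 66x_1 - 21)k - 16x_1³ + 42x_1² - 36x_1 + 11] / (6(k-1)²). Then max{f_3(x_1) : x_1 ∈ [1/2, 1]} = f_3(1/2) = (3k-2)(2k-3)/(24(k-1)²). -/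
/-- The function obtained by substituting `x_2 = ... = x_k = (1 - x_1)/(k-1)` into the
continuous distance-unbalancedness function. -/
noncomputable def f3 (k : ℕ) (x : ℝ) : ℝ :=
  ((-10 * x ^ 3 + 27 * x ^ 2 - 24 * x + 8) * (k : ℝ) ^ 2
    + (28 * x ^ 3 - 75 * x ^ 2 + 66 * x - 21) * (k : ℝ)
    - 16 * x ^ 3 + 42 * x ^ 2 - 36 * x + 11) / (6 * ((k : ℝ) - 1) ^ 2)

theorem f3_max {k : ℕ} (hk : 3 ≤ k) :
    (∀ x ∈ Set.Icc (1 / 2 : ℝ) 1, f3 k x ≤ f3 k (1 / 2))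
      ∧ f3 k (1 / 2)
          = (3 * (k : ℝ) - 2) * (2 * (k : ℝ) - 3) / (24 * ((k : ℝ) - 1) ^ 2) := by
  have hK : (3 : ℝ) ≤ (k : ℝ) := by exact_mod_cast hk
  have hK1 : (0 : ℝ) < (k : ℝ) - 1 := by linarith
  have hden : (0 : ℝ) < 6 * ((k : ℝ) - 1) ^ 2 := by positivity
  constructor
  · rintro x ⟨hx1, hx2⟩
    unfold f3
    rw [div_le_div_iff_of_pos_right hden]
    set K : ℝ := (k : ℝ)
    have hfac : ((-10 * (1/2 : ℝ) ^ 3 + 27 * (1/2 : ℝ) ^ 2 - 24 * (1/2 : ℝ) + 8) * K ^ 2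
        + (28 * (1/2 : ℝ) ^ 3 - 75 * (1/2 : ℝ) ^ 2 + 66 * (1/2 : ℝ) - 21) * K
        - 16 * (1/2 : ℝ) ^ 3 + 42 * (1/2 : ℝ) ^ 2 - 36 * (1/2 : ℝ) + 11)
        - ((-10 * x ^ 3 + 27 * x ^ 2 - 24 * x + 8) * K ^ 2
        + (28 * x ^ 3 - 75 * x ^ 2 + 66 * x - 21) * K
        - 16 * x ^ 3 + 42 * x ^ 2 - 36 * x + 11)
        = (x - 1/2) * ((10 * K ^ 2 - 28 * K + 16) * x ^ 2
            + (-22 * K ^ 2 + 61 * K - 34) * x + (13 * K ^ 2 - 71/2 * K + 19)) := by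
      ring
    have hQ : (0 : ℝ) ≤ (10 * K ^ 2 - 28 * K + 16) * x ^ 2
        + (-22 * K ^ 2 + 61 * K - 34) * x + (13 * K ^ 2 - 71/2 * K + 19) := by
      nlinarith [sq_nonneg (x - 1/2), sq_nonneg (1 - x), mul_nonneg (sub_nonneg.2 hx1) (sub_nonneg.2 hx2),
        sq_nonneg (K - 3), mul_nonneg (mul_nonneg (sub_nonneg.2 hx1) (sub_nonneg.2 hx2)) (sub_nonneg.2 hK),
        mul_nonneg (sq_nonneg (x - 1/2)) (sub_nonneg.2 hK), mul_nonneg (sq_nonneg (1 - x)) (sub_nonneg.2 hK),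
        mul_nonneg (sq_nonneg (K - 3)) (sub_nonneg.2 hx1)]
    nlinarith [mul_nonneg (sub_nonneg.2 hx1) hQ]
  · unfold f3
    have h1 : (24 : ℝ) * ((k : ℝ) - 1) ^ 2 ≠ 0 := by positivity
    have h2 : (6 : ℝ) * ((k : ℝ) - 1) ^ 2 ≠ 0 := by positivity
    field_simp
    ring
end

section
/- For k ≥ 3, x_1 ∈ [1/2, 1], and real y with 0 ≤ y < 2/5, the function f_2(x_1, y) = (-5k²/6 + 4k/3 - 1/2)y³ + ((k-1)(k + x_1 - 1)/2)y² + ((k-1)(5x_1² - 6x_1 + 2)/2)y + (x_1 - 3x_1²/2 + 5x_1³/6 - 1/6) has ∂f_2/∂y > 0; in particular f_2(x_1, ·) is strictly increasing on [0, 2/5). -/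
/-!
Up to the positive factor `(k - 1) / 2`, `∂f₂/∂y` is the quadratic
`(3 - 5k) y² + (2k + 2x₁ - 2) y + (5x₁² - 6x₁ + 2)`. Its leading coefficient is negative, so on
`0 ≤ y ≤ 2/5` the bound `y² ≤ (2/5) y` linearises it from below to
`(2x₁ - 4/5) y + (5x₁² - 6x₁ + 2)`, which is positive since `x₁ ≥ 2/5` and `5x₁² - 6x₁ + 2` has
negative discriminant. A positive derivative on an interval gives strict monotonicity.
-/

noncomputable def f2 (k x₁ y : ℝ) : ℝ :=
  (-5 * k ^ 2 / 6 + 4 * k / 3 - 1 / 2) * y ^ 3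
    + (k - 1) * (k + x₁ - 1) / 2 * y ^ 2
    + (k - 1) * (5 * x₁ ^ 2 - 6 * x₁ + 2) / 2 * y
    + (x₁ - 3 * x₁ ^ 2 / 2 + 5 * x₁ ^ 3 / 6 - 1 / 6)

lemma hasDerivAt_cubic (a b c d y : ℝ) :
    HasDerivAt (fun y : ℝ => a * y ^ 3 + b * y ^ 2 + c * y + d)
      (3 * a * y ^ 2 + 2 * b * y + c) y := by
  have h := ((((hasDerivAt_pow 3 y).const_mul a).add ((hasDerivAt_pow 2 y).const_mul b)).add
    ((hasDerivAt_id y).const_mul c)).add_const d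
  exact h.congr_deriv (by ring)

lemma hasDerivAt_f2 (k x₁ y : ℝ) :
    HasDerivAt (f2 k x₁)
      ((k - 1) / 2 * ((3 - 5 * k) * y ^ 2 + (2 * k + 2 * x₁ - 2) * y
        + (5 * x₁ ^ 2 - 6 * x₁ + 2))) y :=
  (hasDerivAt_cubic _ _ _ _ y).congr_deriv (by ring)

lemma five_mul_sq_sub_six_mul_add_two_pos (x₁ : ℝ) : 0 < 5 * x₁ ^ 2 - 6 * x₁ + 2 := by
  nlinarith [sq_nonneg (5 * x₁ - 3)]

lemma f2_deriv_factor_pos {k x₁ y : ℝ} (hk : 1 ≤ k) (hx₁ : 2 / 5 ≤ x₁) (hy₀ : 0 ≤ y)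
    (hy : y ≤ 2 / 5) :
    0 < (3 - 5 * k) * y ^ 2 + (2 * k + 2 * x₁ - 2) * y + (5 * x₁ ^ 2 - 6 * x₁ + 2) := by
  have hsq : (3 - 5 * k) * (2 / 5 * y) ≤ (3 - 5 * k) * y ^ 2 :=
    mul_le_mul_of_nonpos_left (by nlinarith) (by linarith)
  linarith [five_mul_sq_sub_six_mul_add_two_pos x₁,
    mul_nonneg (by linarith : 0 ≤ 2 * x₁ - 4 / 5) hy₀]

lemma deriv_f2_pos {k x₁ y : ℝ} (hk : 1 < k) (hx₁ : 2 / 5 ≤ x₁) (hy₀ : 0 ≤ y) (hy : y ≤ 2 / 5) :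
    0 < deriv (f2 k x₁) y := by
  rw [(hasDerivAt_f2 k x₁ y).deriv]
  exact mul_pos (by linarith) (f2_deriv_factor_pos hk.le hx₁ hy₀ hy)

theorem f2_strict_mono_general {k : ℕ} (hk : 3 ≤ k) (x1 : ℝ) (hx1 : 1 / 2 ≤ x1) :
    (∀ y ∈ Set.Ico (0 : ℝ) (2 / 5),
        0 < deriv (fun y : ℝ =>
          (-5 * (k : ℝ) ^ 2 / 6 + 4 * (k : ℝ) / 3 - 1 / 2) * y ^ 3
            + ((k : ℝ) - 1) * ((k : ℝ) + x1 - 1) / 2 * y ^ 2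
            + ((k : ℝ) - 1) * (5 * x1 ^ 2 - 6 * x1 + 2) / 2 * y
            + (x1 - 3 * x1 ^ 2 / 2 + 5 * x1 ^ 3 / 6 - 1 / 6)) y)
      ∧ StrictMonoOn (fun y : ℝ =>
          (-5 * (k : ℝ) ^ 2 / 6 + 4 * (k : ℝ) / 3 - 1 / 2) * y ^ 3
            + ((k : ℝ) - 1) * ((k : ℝ) + x1 - 1) / 2 * y ^ 2
            + ((k : ℝ) - 1) * (5 * x1 ^ 2 - 6 * x1 + 2) / 2 * y
            + (x1 - 3 * x1 ^ 2 / 2 + 5 * x1 ^ 3 / 6 - 1 / 6))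
          (Set.Ico (0 : ℝ) (2 / 5)) := by
  change (∀ y ∈ Set.Ico (0 : ℝ) (2 / 5), 0 < deriv (f2 k x1) y)
    ∧ StrictMonoOn (f2 k x1) (Set.Ico (0 : ℝ) (2 / 5))
  have hk' : (1 : ℝ) < k := by exact_mod_cast (by omega : 1 < k)
  have hx1₀ : (2 / 5 : ℝ) ≤ x1 := by linarith
  have hpos : ∀ y ∈ Set.Ico (0 : ℝ) (2 / 5), 0 < deriv (f2 k x1) y :=
    fun y hy => deriv_f2_pos hk' hx1₀ hy.1 hy.2.le
  refine ⟨hpos, strictMonoOn_of_deriv_pos (convex_Ico 0 (2 / 5)) ?_ ?_⟩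
  · exact HasDerivAt.continuousOn fun y _ => hasDerivAt_f2 k x1 y
  · rw [interior_Ico]
    exact fun y hy => hpos y ⟨hy.1.le, hy.2⟩

theorem f2_strict_mono {k : ℕ} (hk : 3 ≤ k) (x1 : ℝ) (hx1 : 1 / 2 ≤ x1) (hx1' : x1 ≤ 1) :
    (∀ y ∈ Set.Ico (0 : ℝ) (2 / 5),
        0 < deriv (fun y : ℝ =>
          (-5 * (k : ℝ) ^ 2 / 6 + 4 * (k : ℝ) / 3 - 1 / 2) * y ^ 3
            + ((k : ℝ) - 1) * ((k : ℝ) + x1 - 1) / 2 * y ^ 2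
            + ((k : ℝ) - 1) * (5 * x1 ^ 2 - 6 * x1 + 2) / 2 * y
            + (x1 - 3 * x1 ^ 2 / 2 + 5 * x1 ^ 3 / 6 - 1 / 6)) y)
      ∧ StrictMonoOn (fun y : ℝ =>
          (-5 * (k : ℝ) ^ 2 / 6 + 4 * (k : ℝ) / 3 - 1 / 2) * y ^ 3
            + ((k : ℝ) - 1) * ((k : ℝ) + x1 - 1) / 2 * y ^ 2
            + ((k : ℝ) - 1) * (5 * x1 ^ 2 - 6 * x1 + 2) / 2 * y
            + (x1 - 3 * x1 ^ 2 / 2 + 5 * x1 ^ 3 / 6 - 1 / 6))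
          (Set.Ico (0 : ℝ) (2 / 5)) :=
  f2_strict_mono_general hk x1 hx1
end

section
/- The maximum of uB(T) over all trees T of order n is (1/2)n³ + o(n³); that is, lim_{n→∞} max{uB(T) : T tree of order n} / n³ = 1/2. -/
open Filter

/-- `nclose G u v` is the number of vertices `w` that are closer to `u` than to `v`. -/
noncomputable def nclose {V : Type*} [Fintype V] (G : SimpleGraph V) (u v : V) : ℕ :=
  Nat.card {w : V | G.dist u w < G.dist v w}

/-- The distance-unbalancedness: sum of `|n_G(u,v) - n_G(v,u)|` over unordered pairs. -/
noncomputable def uB {n : ℕ} (G : SimpleGraph (Fin n)) : ℕ :=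
  ∑ u : Fin n, ∑ v ∈ Finset.Ioi u, ((nclose G u v : ℤ) - (nclose G v u : ℤ)).natAbs

/-!
Every one of the `n (n - 1)` ordered pairs contributes at most `n` to `2 uB`, so `uB ≤ n³ / 2`.
Conversely, take the subdivided star with `k = ⌊√n⌋` branches, each of at most `k + 2` vertices.
If `depth u < depth v`, every vertex off the branch of `v` is strictly closer to `u`, so
`|n(u,v) - n(v,u)| ≥ n - 2 (k + 2)`; and every `u` has at least `n - k` partners of a different
depth, since a depth class has at most `k` vertices. Hence `2 uB ≥ (n - 6k)³`.
-/

open Finset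

namespace SimpleGraph

variable {V : Type*} {G : SimpleGraph V}

theorem isAcyclic_of_smaller_neighbor_unique [LinearOrder V]
    (h : ∀ ⦃x y z⦄, G.Adj x y → G.Adj x z → y < x → z < x → y = z) : G.IsAcyclic := by
  -- The largest vertex of a cycle has two distinct smaller neighbours on it.
  intro v c hc
  set x := c.support.toFinset.max' ⟨v, by simp⟩
  have hx : x ∈ c.support := List.mem_toFinset.mp (max'_mem _ _)
  set c' := c.rotate x hx
  have hc' : c'.IsCycle := hc.rotate hx
  have hlt : ∀ y, G.Adj x y → y ∈ c'.support → y < x := fun y hxy hy =>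
    lt_of_le_of_ne (le_max' _ _ (by simpa [c'] using hy)) hxy.ne'
  have hnil := hc'.not_nil
  exact hc'.snd_ne_penultimate <| h (c'.adj_snd hnil) (c'.adj_penultimate hnil).symm
    (hlt _ (c'.adj_snd hnil) (c'.getVert_mem_support 1))
    (hlt _ (c'.adj_penultimate hnil).symm (c'.getVert_mem_support _))

theorem Walk.le_add_length_of_lipschitz (f : V → ℕ)
    (hf : ∀ ⦃x y⦄, G.Adj x y → f y ≤ f x + 1)
    {a b : V} (p : G.Walk a b) : f b ≤ f a + p.length := by
  induction p with
  | nil => simp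
  | cons hxy _ ih => rw [length_cons]; have := hf hxy; omega

theorem Reachable.le_add_dist_of_lipschitz (f : V → ℕ)
    (hf : ∀ ⦃x y⦄, G.Adj x y → f y ≤ f x + 1)
    {a b : V} (hab : G.Reachable a b) : f b ≤ f a + G.dist a b := by
  obtain ⟨p, hp⟩ := hab.exists_walk_length_eq_dist
  exact hp ▸ p.le_add_length_of_lipschitz f hf

end SimpleGraph

open scoped Classical in
theorem nclose_eq_card_filter {V : Type*} [Fintype V] (G : SimpleGraph V) (u v : V) :
    nclose G u v = #{w | G.dist u w < G.dist v w} := by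
  rw [nclose, Nat.card_coe_set_eq, Set.ncard_eq_toFinset_card', Set.toFinset_ofPred]

theorem nclose_le_card {V : Type*} [Fintype V] (G : SimpleGraph V) (u v : V) :
    nclose G u v ≤ Fintype.card V := by
  classical
  exact nclose_eq_card_filter G u v ▸ card_le_univ _

section Unbalance

variable {n : ℕ} (G : SimpleGraph (Fin n))

noncomputable def unbalance (u v : Fin n) : ℕ :=
  ((nclose G u v : ℤ) - nclose G v u).natAbs

theorem unbalance_comm (u v : Fin n) : unbalance G u v = unbalance G v u := by
  unfold unbalance; omega

theorem unbalance_le (u v : Fin n) : unbalance G u v ≤ n := by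
  have := nclose_le_card G u v
  have := nclose_le_card G v u
  simp only [Fintype.card_fin] at *
  unfold unbalance; omega

theorem two_mul_uB : 2 * uB G = ∑ u, ∑ v ∈ {u}ᶜ, unbalance G u v := by
  rw [← sum_sum_Ioi_add_eq_sum_sum_off_diag, uB, mul_sum]
  refine sum_congr rfl fun u _ => ?_
  rw [mul_sum]
  exact sum_congr rfl fun v _ => by rw [unbalance_comm G v u, unbalance]; ring

theorem two_mul_uB_le : 2 * uB G ≤ n ^ 3 :=
  calc 2 * uB G = ∑ u, ∑ v ∈ {u}ᶜ, unbalance G u v := two_mul_uB G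
    _ ≤ ∑ _u : Fin n, ∑ _v : Fin n, n :=
      sum_le_sum fun u _ => (sum_le_sum_of_subset (subset_univ _)).trans
        (sum_le_sum fun v _ => unbalance_le G u v)
    _ = n ^ 3 := by simp; ring

theorem card_sub_card_compl_le_unbalance {u v : Fin n} (A : Finset (Fin n))
    (hA : ∀ w ∈ A, G.dist u w < G.dist v w) : #A - #Aᶜ ≤ unbalance G u v := by
  classical
  have hu : #A ≤ nclose G u v := nclose_eq_card_filter G u v ▸
    card_le_card fun w hw => mem_filter.mpr ⟨mem_univ w, hA w hw⟩
  have hv : nclose G v u ≤ #Aᶜ := nclose_eq_card_filter G v u ▸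
    card_le_card fun w hw => mem_compl.mpr fun hwA =>
      (lt_asymm (hA w hwA) (mem_filter.mp hw).2)
  unfold unbalance; omega

end Unbalance

namespace SubdividedStar

def depth (k m : ℕ) : ℕ := if m = 0 then 0 else (m - 1) / k + 1

def branch (k m : ℕ) : ℕ := (m - 1) % k

variable {k : ℕ}

theorem depth_sub (hk : 0 < k) {m : ℕ} (hm : m ≠ 0) : depth k (m - k) + 1 = depth k m := by
  unfold depth
  by_cases hmk : m ≤ k
  · rw [if_pos (by omega), if_neg hm, Nat.div_eq_of_lt (by omega)]
  · rw [if_neg (by omega), if_neg hm, show m - 1 = m - k - 1 + k by omega,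
      Nat.add_div_right _ hk]

theorem branch_sub {m : ℕ} (hm : k < m) : branch k (m - k) = branch k m := by
  rw [branch, branch, show m - 1 = m - k - 1 + k by omega, Nat.add_mod_right]

theorem eq_of_branch_eq_of_depth_eq {u v : ℕ} (hb : branch k u = branch k v)
    (hd : depth k u = depth k v) : u = v := by
  unfold depth at hd
  split_ifs at hd <;> try omega
  rw [Nat.add_right_cancel_iff] at hd
  have hu' := Nat.div_add_mod (u - 1) k
  rw [branch, branch] at hb
  rw [hd, hb] at hu'
  have := Nat.div_add_mod (v - 1) k
  omega

/-- Vertex `0` is the centre; vertex `m ≠ 0` lies on branch `branch k m` at depth `depth k m` and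
is joined to `m - k`, which is the centre when `m ≤ k`. -/
def graph (n k : ℕ) : SimpleGraph (Fin n) :=
  SimpleGraph.fromRel fun u v => (u : ℕ) ≠ 0 ∧ (v : ℕ) = u - k

variable {n : ℕ}

theorem graph_adj (hk : 0 < k) {u v : Fin n} :
    (graph n k).Adj u v ↔
      ((u : ℕ) ≠ 0 ∧ (v : ℕ) = u - k) ∨ ((v : ℕ) ≠ 0 ∧ (u : ℕ) = v - k) := by
  rw [graph, SimpleGraph.fromRel_adj, and_iff_right_iff_imp]
  rintro (⟨hu, huv⟩ | ⟨hv, hvu⟩) rfl <;> omega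

theorem exists_walk_zero_length_eq_depth (hk : 0 < k) (hn : 0 < n) (m : Fin n) :
    ∃ p : (graph n k).Walk m ⟨0, hn⟩, p.length = depth k m := by
  induction hm : (m : ℕ) using Nat.strong_induction_on generalizing m with | _ a ih =>
  by_cases h0 : a = 0
  · obtain rfl : m = ⟨0, hn⟩ := Fin.ext (hm.trans h0)
    exact ⟨.nil, by simp [depth, h0]⟩
  · let m' : Fin n := ⟨a - k, by omega⟩
    obtain ⟨p, hp⟩ := ih (a - k) (by omega) m' rfl
    have hadj : (graph n k).Adj m m' := (graph_adj hk).mpr (.inl ⟨hm ▸ h0, by simp [m', hm]⟩)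
    exact ⟨.cons hadj p, by rw [SimpleGraph.Walk.length_cons, hp, depth_sub hk h0]⟩

theorem graph_connected (hk : 0 < k) (hn : 0 < n) : (graph n k).Connected := by
  refine (SimpleGraph.connected_iff_exists_forall_reachable _).mpr ⟨⟨0, hn⟩, fun m => ?_⟩
  obtain ⟨p, -⟩ := exists_walk_zero_length_eq_depth hk hn m
  exact p.reachable.symm

theorem graph_isAcyclic (hk : 0 < k) : (graph n k).IsAcyclic :=
  SimpleGraph.isAcyclic_of_smaller_neighbor_unique fun x y z hxy hxz hyx hzx => by
    rw [graph_adj hk] at hxy hxz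
    rw [Fin.lt_def] at hyx hzx
    exact Fin.ext (by omega)

theorem dist_le_depth_add_depth (hk : 0 < k) (hn : 0 < n) (u w : Fin n) :
    (graph n k).dist u w ≤ depth k u + depth k w := by
  obtain ⟨p, hp⟩ := exists_walk_zero_length_eq_depth hk hn u
  obtain ⟨q, hq⟩ := exists_walk_zero_length_eq_depth hk hn w
  simpa [hp, hq] using SimpleGraph.dist_le (p.append q.reverse)

theorem depth_add_depth_le_dist (hk : 0 < k) (hn : 0 < n) {v w : Fin n} (hv : (v : ℕ) ≠ 0)
    (hw : (w : ℕ) = 0 ∨ branch k w ≠ branch k v) :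
    depth k v + depth k w ≤ (graph n k).dist v w := by
  -- `f` changes by at most one along each edge, vanishes at `v`, and is exact off `v`'s branch.
  let f : ℕ → ℕ := fun x =>
    if x ≠ 0 ∧ branch k x = branch k v then depth k v - depth k x else depth k v + depth k x
  have hstep (m : ℕ) (hm : m ≠ 0) : f (m - k) ≤ f m + 1 ∧ f m ≤ f (m - k) + 1 := by
    have hd := depth_sub hk hm
    by_cases hmk : m ≤ k
    · have h0 : m - k = 0 := by omega
      have hd0 : depth k 0 = 0 := if_pos rfl
      simp only [f, h0, hd0] at hd ⊢
      split_ifs <;> omega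
    · simp only [f, branch_sub (by omega : k < m)]
      split_ifs <;> omega
  have hf : ∀ ⦃x y : Fin n⦄, (graph n k).Adj x y → f y ≤ f x + 1 := by
    intro x y hxy
    rcases (graph_adj hk).mp hxy with ⟨hx, hy⟩ | ⟨hy, hx⟩
    · rw [hy]; exact (hstep x hx).1
    · rw [hx]; exact (hstep y hy).2
  have hfv : f v = 0 := by simp [f, hv]
  have hfw : f w = depth k v + depth k w := by rcases hw with h | h <;> simp [f, h]
  have := ((graph_connected hk hn) v w).le_add_dist_of_lipschitz (f ∘ Fin.val) hf
  simp only [Function.comp_apply, hfv, hfw] at this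
  omega

theorem dist_lt_dist_of_depth_lt (hk : 0 < k) (hn : 0 < n) {u v w : Fin n}
    (hd : depth k u < depth k v)
    (hw : (w : ℕ) = 0 ∨ branch k w ≠ branch k v) :
    (graph n k).dist u w < (graph n k).dist v w := by
  have hv : (v : ℕ) ≠ 0 := by rintro h0; simp [depth, h0] at hd
  have := dist_le_depth_add_depth hk hn u w
  have := depth_add_depth_le_dist hk hn hv hw
  omega

theorem card_branch_le (i : ℕ) :
    #{w : Fin n | (w : ℕ) ≠ 0 ∧ branch k w = i} ≤ (n - 2) / k + 1 := by
  refine le_of_le_of_eq (card_le_card_of_injOn (s := {w : Fin n | (w : ℕ) ≠ 0 ∧ branch k w = i})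
    (t := Icc 1 ((n - 2) / k + 1)) (fun w => depth k w) (fun w hw => ?_) (fun w hw w' hw' h => ?_))
    (by simp)
  · rw [mem_coe, mem_filter] at hw
    rw [mem_coe, mem_Icc]
    simp only [depth, if_neg hw.2.1]
    exact ⟨Nat.le_add_left _ _,
      Nat.add_le_add_right (Nat.div_le_div_right (by omega : (w : ℕ) - 1 ≤ n - 2)) 1⟩
  · rw [mem_coe, mem_filter] at hw hw'
    exact Fin.ext (eq_of_branch_eq_of_depth_eq (hw.2.2.trans hw'.2.2.symm) h)

theorem card_depth_le (hk : 0 < k) (d : ℕ) : #{w : Fin n | depth k w = d} ≤ k := by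
  refine le_of_le_of_eq (card_le_card_of_injOn (s := {w : Fin n | depth k w = d}) (t := range k)
    (fun w => branch k w) (fun w _ => ?_) (fun w hw w' hw' h => ?_)) (card_range k)
  · rw [mem_coe, mem_range]
    exact Nat.mod_lt _ hk
  · rw [mem_coe, mem_filter] at hw hw'
    exact Fin.ext (eq_of_branch_eq_of_depth_eq h (hw.2.trans hw'.2.symm))

theorem sub_le_unbalance (hk : 0 < k) (hn : 0 < n) {u v : Fin n} (hd : depth k u ≠ depth k v) :
    n - 2 * ((n - 2) / k + 1) ≤ unbalance (graph n k) u v := by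
  wlog h : depth k u < depth k v generalizing u v
  · rw [unbalance_comm]; exact this hd.symm (by omega)
  let A : Finset (Fin n) := {w | (w : ℕ) = 0 ∨ branch k w ≠ branch k v}
  have hAc : #Aᶜ ≤ (n - 2) / k + 1 := by
    refine (card_le_card fun w hw => ?_).trans (card_branch_le (branch k v))
    simpa [A] using hw
  have hA : #A + #Aᶜ = n := by rw [card_add_card_compl, Fintype.card_fin]
  have := card_sub_card_compl_le_unbalance (graph n k) A fun w hw =>
    dist_lt_dist_of_depth_lt hk hn h (by simpa [A] using hw)
  omega

theorem mul_mul_le_two_mul_uB (hk : 0 < k) (hn : 0 < n) :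
    n * (n - k) * (n - 2 * ((n - 2) / k + 1)) ≤ 2 * uB (graph n k) := by
  set c := n - 2 * ((n - 2) / k + 1)
  have hrow (u : Fin n) :
      (n - k) * c ≤ ∑ v ∈ {v : Fin n | depth k v ≠ depth k u}, unbalance (graph n k) u v := by
    have hcard : n - k ≤ #{v : Fin n | depth k v ≠ depth k u} := by
      have := card_depth_le (n := n) hk (depth k u)
      have := card_filter_add_card_filter_not (s := univ) fun v : Fin n => depth k v = depth k u
      simp only [← ne_eq, card_univ, Fintype.card_fin] at this
      omega
    calc (n - k) * c ≤ #{v : Fin n | depth k v ≠ depth k u} * c := Nat.mul_le_mul_right _ hcard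
      _ = ∑ v ∈ {v : Fin n | depth k v ≠ depth k u}, c := by rw [sum_const, smul_eq_mul]
      _ ≤ _ := sum_le_sum fun v hv => sub_le_unbalance hk hn (mem_filter.mp hv).2.symm
  calc n * (n - k) * c = ∑ _u : Fin n, (n - k) * c := by simp [mul_assoc]
    _ ≤ ∑ u : Fin n, ∑ v ∈ {v : Fin n | depth k v ≠ depth k u}, unbalance (graph n k) u v :=
      sum_le_sum fun u _ => hrow u
    _ ≤ ∑ u, ∑ v ∈ {u}ᶜ, unbalance (graph n k) u v := sum_le_sum fun u _ =>
      sum_le_sum_of_subset fun v hv => mem_compl.mpr fun huv => by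
        simp [mem_singleton.mp huv] at hv
    _ = 2 * uB (graph n k) := (two_mul_uB _).symm

theorem cube_le_two_mul_uB (hk : 0 < k) (hn : 0 < n) (hnk : n < (k + 1) * (k + 1)) :
    (n - 6 * k) ^ 3 ≤ 2 * uB (graph n k) := by
  have hL : (n - 2) / k + 1 ≤ k + 2 := by
    have hsq : (k + 1) * (k + 1) = (k + 2) * k + 1 := by ring
    have : 0 < (k + 2) * k := by positivity
    have : (n - 2) / k < k + 2 := (Nat.div_lt_iff_lt_mul hk).mpr (by omega)
    omega
  calc (n - 6 * k) ^ 3 = (n - 6 * k) * (n - 6 * k) * (n - 6 * k) := by ring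
    _ ≤ n * (n - k) * (n - 2 * ((n - 2) / k + 1)) :=
      Nat.mul_le_mul (Nat.mul_le_mul (Nat.sub_le _ _) (by omega)) (by omega)
    _ ≤ 2 * uB (graph n k) := mul_mul_le_two_mul_uB hk hn

end SubdividedStar

noncomputable def maxTreeUB (n : ℕ) : ℕ :=
  sSup {m : ℕ | ∃ G : SimpleGraph (Fin n), G.Connected ∧ G.IsAcyclic ∧ uB G = m}

theorem two_mul_maxTreeUB_le (n : ℕ) : 2 * maxTreeUB n ≤ n ^ 3 := by
  have : maxTreeUB n ≤ n ^ 3 / 2 := csSup_le' fun m ⟨G, _, _, hG⟩ =>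
    hG ▸ (Nat.le_div_iff_mul_le two_pos).mpr (by linarith [two_mul_uB_le G])
  omega

theorem uB_le_maxTreeUB {n : ℕ} {G : SimpleGraph (Fin n)} (hc : G.Connected) (ha : G.IsAcyclic) :
    uB G ≤ maxTreeUB n :=
  le_csSup ⟨n ^ 3, fun m ⟨G, _, _, hG⟩ => hG ▸ by linarith [two_mul_uB_le G]⟩ ⟨G, hc, ha, rfl⟩

theorem cube_le_two_mul_maxTreeUB {n : ℕ} (hn : 0 < n) :
    (n - 6 * Nat.sqrt n) ^ 3 ≤ 2 * maxTreeUB n := by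
  have hk : 0 < Nat.sqrt n := Nat.sqrt_pos.mpr hn
  calc _ ≤ 2 * uB (SubdividedStar.graph n (Nat.sqrt n)) :=
        SubdividedStar.cube_le_two_mul_uB hk hn (Nat.lt_succ_sqrt n)
    _ ≤ 2 * maxTreeUB n := Nat.mul_le_mul_left 2 <| uB_le_maxTreeUB
      (SubdividedStar.graph_connected hk hn) (SubdividedStar.graph_isAcyclic hk)

theorem le_maxTreeUB_div_cube {n : ℕ} (hn : 36 ≤ n) :
    (1 - 6 / √n) ^ 3 / 2 ≤ maxTreeUB n / (n : ℝ) ^ 3 := by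
  have hn0 : (0 : ℝ) < n := by positivity
  have hs : √(n : ℝ) * √n = n := Real.mul_self_sqrt hn0.le
  have hs6 : 6 ≤ √(n : ℝ) := Real.le_sqrt_of_sq_le (by exact_mod_cast (by omega : 6 ^ 2 ≤ n))
  have hk : (Nat.sqrt n : ℝ) ≤ √n := Real.nat_sqrt_le_real_sqrt
  have h6k : 6 * Nat.sqrt n ≤ n := by exact_mod_cast (by nlinarith : (6 * Nat.sqrt n : ℝ) ≤ n)
  have hcast : (n : ℝ) - 6 * √n ≤ (n - 6 * Nat.sqrt n : ℕ) := by
    rw [Nat.cast_sub h6k]; push_cast; linarith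
  have hcube : ((n : ℝ) - 6 * √n) ^ 3 ≤ 2 * maxTreeUB n := by
    have : ((n - 6 * Nat.sqrt n : ℕ) : ℝ) ^ 3 ≤ 2 * maxTreeUB n := by
      exact_mod_cast cube_le_two_mul_maxTreeUB (by omega : 0 < n)
    exact (pow_le_pow_left₀ (by nlinarith) hcast 3).trans this
  rw [div_le_div_iff₀ two_pos (by positivity)]
  have hfactor : (1 - 6 / √(n : ℝ)) * n = n - 6 * √n := by
    field_simp
    linear_combination 6 * hs
  calc (1 - 6 / √(n : ℝ)) ^ 3 * (n : ℝ) ^ 3 = ((n : ℝ) - 6 * √n) ^ 3 := by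
        rw [← mul_pow, hfactor]
    _ ≤ 2 * (maxTreeUB n : ℝ) := hcube
    _ = _ := by ring

theorem max_uB_tree_asymptotics :
    Tendsto (fun n : ℕ =>
        ((sSup {m : ℕ | ∃ G : SimpleGraph (Fin n), G.Connected ∧ G.IsAcyclic ∧ uB G = m} : ℕ) : ℝ)
          / (n : ℝ) ^ 3)
      atTop (nhds (1 / 2)) := by
  change Tendsto (fun n : ℕ => (maxTreeUB n : ℝ) / (n : ℝ) ^ 3) atTop (nhds (1 / 2))
  have hlim : Tendsto (fun n : ℕ => (1 - 6 / √(n : ℝ)) ^ 3 / 2) atTop (nhds (1 / 2)) := by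
    have := tendsto_const_nhds (x := (6 : ℝ)).div_atTop
      (Real.tendsto_sqrt_atTop.comp tendsto_natCast_atTop_atTop)
    simpa using ((tendsto_const_nhds (x := (1 : ℝ)).sub this).pow 3).div_const 2
  refine tendsto_of_tendsto_of_tendsto_of_le_of_le' hlim tendsto_const_nhds ?_ ?_
  · filter_upwards [eventually_ge_atTop 36] with n hn
    exact le_maxTreeUB_div_cube hn
  · filter_upwards [eventually_gt_atTop 0] with n hn
    rw [div_le_iff₀ (by positivity)]
    have : (2 * maxTreeUB n : ℝ) ≤ n ^ 3 := by exact_mod_cast two_mul_maxTreeUB_le n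
    linarith
end
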